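/- Consider the scheduled stochastic gradient iteration in which, at step k, g_k is a random vector with conditional mean ∇J(w_k) and conditional covariance G given w_k, the decision is α_k = 1 if J(w_k - εg_k) - J(w_k) ≤ -λ and α_k = 0 otherwise, and w_{k+1} = w_k - εg_k if α_k = 1 and w_{k+1} = w_k otherwise. Then the conditional expectation satisfies E[J(w_{k+1}) | w_k] ≤ λ + ρ J(w_k) + ε² Tr(Σ_x G) + (1 - ρ) J(w*), where ρ = max over the eigenvalues λ̃ of E[xxᵀ] of (1 - ελ̃)². -/

import Mathlib

/-!
With `A = E[xxᵀ]`, the loss is a quadratic centred at its minimiser: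
`J w = J w* + ½ (w - w*)ᵀ A (w - w*)`. Expanding `J (w - εg)` and conditioning on `w`, the
conditional mean of `g` turns the linear term into an exact gradient step and its conditional
covariance leaves a trace term: `E[J (w - εg) | w] = J (w - ε ∇J w) + (ε² / 2) tr(A G)`.
In an eigenbasis of `A` the gradient step multiplies the `i`-th coordinate of `w - w*` by
`1 - ε λᵢ`, whence `J (w - ε ∇J w) - J w* ≤ ρ (J w - J w*)`. Finally, the acceptance rule
gives `J w_{k+1} ≤ J (w_k - ε g_k) + λ` pointwise: an accepted step is `w_k - ε g_k` itself,
and a rejected one has `J w_k < J (w_k - ε g_k) + λ`.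
-/

open MeasureTheory Matrix

namespace Matrix

variable {ι : Type*} [Fintype ι] {A : Matrix ι ι ℝ}

lemma dotProduct_mulVec_eq_sum (x y : ι → ℝ) :
    x ⬝ᵥ A *ᵥ y = ∑ i, ∑ j, x i * A i j * y j := by
  simp only [dotProduct, mulVec, Finset.mul_sum, mul_assoc]

lemma dotProduct_mul_eq_sum (x w : ι → ℝ) (y : ℝ) :
    (x ⬝ᵥ w) * y = ∑ i, w i * (x i * y) := by
  rw [dotProduct, Finset.sum_mul]
  exact Finset.sum_congr rfl fun i _ => by ring

lemma dotProduct_sq_eq_sum (x w : ι → ℝ) :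
    (x ⬝ᵥ w) ^ 2 = ∑ i, ∑ j, w i * (x i * x j) * w j := by
  rw [sq, dotProduct, Finset.sum_mul_sum]
  exact Finset.sum_congr rfl fun i _ => Finset.sum_congr rfl fun j _ => by ring

lemma IsSymm.dotProduct_mulVec_comm (hA : A.IsSymm) (x y : ι → ℝ) :
    x ⬝ᵥ A *ᵥ y = y ⬝ᵥ A *ᵥ x := by
  rw [dotProduct_mulVec, ← mulVec_transpose, hA.eq, dotProduct_comm]

lemma IsSymm.dotProduct_mulVec_sub_smul (hA : A.IsSymm) (d g : ι → ℝ) (t : ℝ) :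
    (d - t • g) ⬝ᵥ A *ᵥ (d - t • g)
      = d ⬝ᵥ A *ᵥ d - 2 * t * ((A *ᵥ d) ⬝ᵥ g) + t ^ 2 * (g ⬝ᵥ A *ᵥ g) := by
  have hdg : d ⬝ᵥ A *ᵥ g = (A *ᵥ d) ⬝ᵥ g := by
    rw [hA.dotProduct_mulVec_comm, dotProduct_comm]
  simp only [mulVec_sub, mulVec_smul, dotProduct_sub, sub_dotProduct, dotProduct_smul,
    smul_dotProduct, smul_eq_mul, hdg, dotProduct_comm g (A *ᵥ d)]
  ring

lemma PosSemidef.sq_mulVec_apply_le (hA : A.PosSemidef) (d : ι → ℝ) (i : ι) :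
    (A *ᵥ d) i ^ 2 ≤ A i i * (d ⬝ᵥ A *ᵥ d) := by
  classical
  have hsymm : A.toBilin'.IsSymm := isSymm_toBilin'_iff_isSymm.2 hA.isHermitian
  have := LinearMap.BilinForm.apply_sq_le_of_symm (B := A.toBilin')
    (fun x => by simpa [toBilin'_apply'] using hA.dotProduct_mulVec_nonneg x)
    (LinearMap.BilinForm.isSymm_iff.1 hsymm) (Pi.single i 1) d
  simpa [toBilin'_apply', single_dotProduct, mulVec_single] using this

namespace IsHermitian

variable [DecidableEq ι] (hA : A.IsHermitian)

local notation "U" => (hA.eigenvectorUnitary : Matrix ι ι ℝ)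

lemma star_eigenvectorUnitary_mulVec_mulVec (v : ι → ℝ) :
    star U *ᵥ (A *ᵥ v) = fun i => hA.eigenvalues i * (star U *ᵥ v) i := by
  have hconj := hA.conjStarAlgAut_star_eigenvectorUnitary
  rw [Unitary.conjStarAlgAut_star_apply, RCLike.ofReal_real_eq_id, Function.id_comp] at hconj
  have hdiag : star U * A = diagonal hA.eigenvalues * star U := by
    rw [← hconj, mul_assoc _ U, Unitary.mul_star_self_of_mem hA.eigenvectorUnitary.2, mul_one]
  funext i
  rw [mulVec_mulVec, hdiag, ← mulVec_mulVec, mulVec_diagonal]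

lemma dotProduct_mulVec_eq_sum_eigenvalues (v : ι → ℝ) :
    v ⬝ᵥ A *ᵥ v = ∑ i, hA.eigenvalues i * (star U *ᵥ v) i ^ 2 := by
  have horth : ∀ x y : ι → ℝ, (star U *ᵥ x) ⬝ᵥ (star U *ᵥ y) = x ⬝ᵥ y := fun x y => by
    rw [dotProduct_mulVec, star_eq_conjTranspose, conjTranspose_eq_transpose_of_trivial,
      mulVec_transpose, vecMul_vecMul, ← conjTranspose_eq_transpose_of_trivial,
      ← star_eq_conjTranspose, Unitary.mul_star_self_of_mem hA.eigenvectorUnitary.2, vecMul_one]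
  rw [← horth, star_eigenvectorUnitary_mulVec_mulVec, dotProduct]
  exact Finset.sum_congr rfl fun i _ => by ring

end IsHermitian

lemma PosSemidef.dotProduct_mulVec_sub_smul_mulVec_le [DecidableEq ι] (hA : A.PosSemidef)
    {t ρ : ℝ} (hρ : ∀ i, (1 - t * hA.isHermitian.eigenvalues i) ^ 2 ≤ ρ) (d : ι → ℝ) :
    (d - t • (A *ᵥ d)) ⬝ᵥ A *ᵥ (d - t • (A *ᵥ d)) ≤ ρ * (d ⬝ᵥ A *ᵥ d) := by
  set e := hA.isHermitian.eigenvalues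
  set c := star (hA.isHermitian.eigenvectorUnitary : Matrix ι ι ℝ) *ᵥ d
  have hstep : star (hA.isHermitian.eigenvectorUnitary : Matrix ι ι ℝ) *ᵥ (d - t • (A *ᵥ d))
      = fun i => (1 - t * e i) * c i := by
    funext i
    simp only [mulVec_sub, mulVec_smul, hA.isHermitian.star_eigenvectorUnitary_mulVec_mulVec,
      Pi.sub_apply, Pi.smul_apply, smul_eq_mul, c]
    ring
  rw [hA.isHermitian.dotProduct_mulVec_eq_sum_eigenvalues,
    hA.isHermitian.dotProduct_mulVec_eq_sum_eigenvalues, hstep, Finset.mul_sum]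
  refine Finset.sum_le_sum fun i _ => ?_
  have hc : 0 ≤ e i * c i ^ 2 := mul_nonneg (hA.eigenvalues_nonneg i) (sq_nonneg _)
  calc e i * ((1 - t * e i) * c i) ^ 2 = (1 - t * e i) ^ 2 * (e i * c i ^ 2) := by ring
    _ ≤ ρ * (e i * c i ^ 2) := mul_le_mul_of_nonneg_right (hρ i) hc

end Matrix

section CenteredQuadratic

variable {ι : Type*} [Fintype ι]

def IsCenteredQuadratic (J : (ι → ℝ) → ℝ) (A : Matrix ι ι ℝ) (wstar : ι → ℝ) : Prop :=
  ∀ w, J w = J wstar + 1 / 2 * ((w - wstar) ⬝ᵥ A *ᵥ (w - wstar))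

variable {J : (ι → ℝ) → ℝ} {A : Matrix ι ι ℝ} {wstar : ι → ℝ}

lemma IsCenteredQuadratic.continuous (hJ : IsCenteredQuadratic J A wstar) : Continuous J := by
  rw [show J = _ from funext hJ]
  fun_prop

lemma IsCenteredQuadratic.apply_sub_smul (hJ : IsCenteredQuadratic J A wstar) (hA : A.IsSymm)
    (w g : ι → ℝ) (t : ℝ) :
    J (w - t • g) = J w - t * ((A *ᵥ (w - wstar)) ⬝ᵥ g) + t ^ 2 / 2 * (g ⬝ᵥ A *ᵥ g) := by
  rw [hJ (w - t • g), hJ w, sub_right_comm, hA.dotProduct_mulVec_sub_smul]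
  ring

lemma IsCenteredQuadratic.apply_sub_smul_mulVec_le [DecidableEq ι]
    (hJ : IsCenteredQuadratic J A wstar) (hA : A.PosSemidef) {t ρ : ℝ}
    (hρ : ∀ i, (1 - t * hA.isHermitian.eigenvalues i) ^ 2 ≤ ρ) (w : ι → ℝ) :
    J (w - t • (A *ᵥ (w - wstar))) ≤ ρ * J w + (1 - ρ) * J wstar := by
  have hcontract := hA.dotProduct_mulVec_sub_smul_mulVec_le hρ (w - wstar)
  rw [hJ (w - _), hJ w, sub_right_comm]
  linarith

end CenteredQuadratic

section LeastSquares

variable {ι : Type*} [Fintype ι] {μ : Measure ((ι → ℝ) × ℝ)}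

variable (μ) in
noncomputable def secondMoment : Matrix ι ι ℝ := of fun i j => ∫ p, p.1 i * p.1 j ∂μ

variable (μ) in
noncomputable def crossMoment : ι → ℝ := fun i => ∫ p, p.1 i * p.2 ∂μ

variable (μ) in
noncomputable def leastSquaresLoss (w : ι → ℝ) : ℝ := 1 / 2 * ∫ p, (p.2 - p.1 ⬝ᵥ w) ^ 2 ∂μ

lemma integrable_dotProduct_mul_snd (hxy : ∀ i, Integrable (fun p => p.1 i * p.2) μ)
    (w : ι → ℝ) : Integrable (fun p => (p.1 ⬝ᵥ w) * p.2) μ := by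
  simp only [dotProduct_mul_eq_sum]
  exact integrable_finsetSum _ fun i _ => (hxy i).const_mul _

lemma integral_dotProduct_mul_snd (hxy : ∀ i, Integrable (fun p => p.1 i * p.2) μ)
    (w : ι → ℝ) : ∫ p, (p.1 ⬝ᵥ w) * p.2 ∂μ = crossMoment μ ⬝ᵥ w := by
  simp only [dotProduct_mul_eq_sum]
  rw [integral_finsetSum _ fun i _ => (hxy i).const_mul _, dotProduct]
  exact Finset.sum_congr rfl fun i _ => by rw [integral_const_mul, crossMoment, mul_comm]

lemma integrable_dotProduct_sq (hxx : ∀ i j, Integrable (fun p => p.1 i * p.1 j) μ)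
    (w : ι → ℝ) : Integrable (fun p => (p.1 ⬝ᵥ w) ^ 2) μ := by
  simp only [dotProduct_sq_eq_sum]
  exact integrable_finsetSum _ fun i _ => integrable_finsetSum _ fun j _ =>
    ((hxx i j).const_mul _).mul_const _

lemma integral_dotProduct_sq (hxx : ∀ i j, Integrable (fun p => p.1 i * p.1 j) μ)
    (w : ι → ℝ) : ∫ p, (p.1 ⬝ᵥ w) ^ 2 ∂μ = w ⬝ᵥ secondMoment μ *ᵥ w := by
  simp only [dotProduct_sq_eq_sum]
  rw [integral_finsetSum _ fun i _ => integrable_finsetSum _ fun j _ =>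
    ((hxx i j).const_mul _).mul_const _, dotProduct_mulVec_eq_sum]
  refine Finset.sum_congr rfl fun i _ => ?_
  rw [integral_finsetSum _ fun j _ => ((hxx i j).const_mul _).mul_const _]
  exact Finset.sum_congr rfl fun j _ => by
    rw [integral_mul_const, integral_const_mul, secondMoment, of_apply]

lemma posSemidef_secondMoment (hxx : ∀ i j, Integrable (fun p => p.1 i * p.1 j) μ) :
    (secondMoment μ).PosSemidef := by
  refine PosSemidef.of_dotProduct_mulVec_nonneg ?_ fun w => ?_
  · refine isHermitian_iff_isSymm.2 ?_
    ext i j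
    simp only [transpose_apply, secondMoment, of_apply, mul_comm]
  · simpa [← integral_dotProduct_sq hxx] using integral_nonneg fun p => sq_nonneg (p.1 ⬝ᵥ w)

lemma integral_sq_sub_dotProduct (hxx : ∀ i j, Integrable (fun p => p.1 i * p.1 j) μ)
    (hxy : ∀ i, Integrable (fun p => p.1 i * p.2) μ) (hyy : Integrable (fun p => p.2 ^ 2) μ)
    (w : ι → ℝ) :
    ∫ p, (p.2 - p.1 ⬝ᵥ w) ^ 2 ∂μ
      = ∫ p, p.2 ^ 2 ∂μ - 2 * (crossMoment μ ⬝ᵥ w) + w ⬝ᵥ secondMoment μ *ᵥ w := by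
  have hexpand : (fun p : (ι → ℝ) × ℝ => (p.2 - p.1 ⬝ᵥ w) ^ 2)
      = fun p => p.2 ^ 2 - 2 * ((p.1 ⬝ᵥ w) * p.2) + (p.1 ⬝ᵥ w) ^ 2 := by
    funext p
    ring
  have hcross : Integrable (fun p : (ι → ℝ) × ℝ => 2 * ((p.1 ⬝ᵥ w) * p.2)) μ :=
    (integrable_dotProduct_mul_snd hxy w).const_mul 2
  have hlin : Integrable (fun p : (ι → ℝ) × ℝ => p.2 ^ 2 - 2 * ((p.1 ⬝ᵥ w) * p.2)) μ :=
    hyy.sub hcross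
  rw [hexpand, integral_add hlin (integrable_dotProduct_sq hxx w), integral_sub hyy hcross,
    integral_const_mul, integral_dotProduct_mul_snd hxy, integral_dotProduct_sq hxx]

lemma isCenteredQuadratic_leastSquaresLoss
    (hxx : ∀ i j, Integrable (fun p => p.1 i * p.1 j) μ)
    (hxy : ∀ i, Integrable (fun p => p.1 i * p.2) μ) (hyy : Integrable (fun p => p.2 ^ 2) μ)
    {wstar : ι → ℝ} (hws : secondMoment μ *ᵥ wstar = crossMoment μ) :
    IsCenteredQuadratic (leastSquaresLoss μ) (secondMoment μ) wstar := by
  intro w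
  have hA := isHermitian_iff_isSymm.1 (posSemidef_secondMoment hxx).isHermitian
  have hcross : ∀ v, crossMoment μ ⬝ᵥ v = (secondMoment μ *ᵥ v) ⬝ᵥ wstar := fun v => by
    rw [← hws, dotProduct_comm, hA.dotProduct_mulVec_comm, dotProduct_comm]
  have hsq := hA.dotProduct_mulVec_sub_smul w wstar 1
  simp only [one_smul] at hsq
  simp only [leastSquaresLoss, integral_sq_sub_dotProduct hxx hxy hyy, hsq, hcross,
    dotProduct_comm (secondMoment μ *ᵥ wstar)]
  ring

end LeastSquares

section Integrability

variable {α ι : Type*} [Fintype ι] {_ : MeasurableSpace α} {ν : Measure α}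

lemma integrable_dotProduct_mulVec {f g : α → ι → ℝ} (A : Matrix ι ι ℝ)
    (h : ∀ i j, Integrable (fun a => f a i * g a j) ν) :
    Integrable (fun a => f a ⬝ᵥ A *ᵥ g a) ν := by
  simp only [dotProduct_mulVec_eq_sum]
  refine integrable_finsetSum _ fun i _ => integrable_finsetSum _ fun j _ => ?_
  simpa only [mul_comm, mul_left_comm] using (h i j).const_mul (A i j)

lemma Matrix.PosSemidef.integrable_mulVec_apply_mul {A : Matrix ι ι ℝ}
    (hA : A.PosSemidef) {d : α → ι → ℝ} (hd : AEStronglyMeasurable d ν)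
    (hq : Integrable (fun a => d a ⬝ᵥ A *ᵥ d a) ν) (i j : ι) :
    Integrable (fun a => (A *ᵥ d a) i * (A *ᵥ d a) j) ν := by
  have hL2 : ∀ i, MemLp (fun a => (A *ᵥ d a) i) 2 ν := fun i => by
    have hmeas : AEStronglyMeasurable (fun a => (A *ᵥ d a) i) ν :=
      (show Continuous fun x : ι → ℝ => (A *ᵥ x) i by fun_prop).comp_aestronglyMeasurable hd
    refine (memLp_two_iff_integrable_sq hmeas).2 ((hq.const_mul (A i i)).mono' (hmeas.pow 2) ?_)
    filter_upwards with a
    rw [Real.norm_of_nonneg (sq_nonneg _)]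
    exact hA.sq_mulVec_apply_le (d a) i
  exact (hL2 i).integrable_mul (hL2 j)

lemma integrable_mulVec_sub_apply_mul {w g : α → ι → ℝ} (A : Matrix ι ι ℝ) (wstar : ι → ℝ)
    (hg : ∀ j, Integrable (fun a => g a j) ν)
    (hwg : ∀ i j, Integrable (fun a => w a i * g a j) ν) (i j : ι) :
    Integrable (fun a => (A *ᵥ (w a - wstar)) i * g a j) ν := by
  have hexpand : (fun a => (A *ᵥ (w a - wstar)) i * g a j)
      = fun a => ∑ k, A i k * (w a k * g a j - wstar k * g a j) := by
    funext a
    simp only [mulVec, dotProduct, Finset.sum_mul]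
    exact Finset.sum_congr rfl fun k _ => by simp only [Pi.sub_apply]; ring
  rw [hexpand]
  exact integrable_finsetSum _ fun k _ => ((hwg k j).sub ((hg j).const_mul _)).const_mul _

lemma IsCenteredQuadratic.integrable_mulVec_apply_mul [IsFiniteMeasure ν] {J : (ι → ℝ) → ℝ}
    {A : Matrix ι ι ℝ} {wstar : ι → ℝ} (hJ : IsCenteredQuadratic J A wstar) (hA : A.PosSemidef)
    {w : α → ι → ℝ} (hw : AEStronglyMeasurable w ν) (hJw : Integrable (fun a => J (w a)) ν)
    (i j : ι) :
    Integrable (fun a => (A *ᵥ (w a - wstar)) i * (A *ᵥ (w a - wstar)) j) ν := by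
  refine hA.integrable_mulVec_apply_mul (hw.sub aestronglyMeasurable_const) ?_ i j
  have hq : (fun a => (w a - wstar) ⬝ᵥ A *ᵥ (w a - wstar))
      = fun a => 2 * (J (w a) - J wstar) := funext fun a => by rw [hJ (w a)]; ring
  simpa only [Pi.sub_apply, hq] using (hJw.sub (integrable_const _)).const_mul 2

end Integrability

section CondExp

variable {Ω ι : Type*} {m m₀ : MeasurableSpace Ω} {P : Measure Ω}

lemma condExp_finsetSum_of_ae_eq {s : Finset ι} {f h : ι → Ω → ℝ}
    (hf : ∀ k ∈ s, Integrable (f k) P) (hfh : ∀ k ∈ s, P[f k|m] =ᵐ[P] h k) :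
    P[fun ω => ∑ k ∈ s, f k ω|m] =ᵐ[P] fun ω => ∑ k ∈ s, h k ω := by
  have hsum := condExp_finsetSum hf m
  simp only [← Finset.sum_fn] at hsum ⊢
  filter_upwards [hsum, (Filter.eventually_all_finset s).2 hfh] with ω hω hk
  rw [hω, Finset.sum_apply, Finset.sum_apply]
  exact Finset.sum_congr rfl hk

variable {g v : Ω → ι → ℝ}

lemma condExp_mul_eq_of_condExp_eq (hv : ∀ i, StronglyMeasurable[m] fun ω => v ω i)
    (hg : ∀ i, Integrable (fun ω => g ω i) P) (hvg : ∀ i j, Integrable (fun ω => v ω i * g ω j) P)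
    (hmean : ∀ i, P[fun ω => g ω i|m] =ᵐ[P] fun ω => v ω i) (i j : ι) :
    P[fun ω => v ω i * g ω j|m] =ᵐ[P] fun ω => v ω i * v ω j :=
  (condExp_mul_of_stronglyMeasurable_left (hv i) (hvg i j) (hg j)).trans
    ((hmean j).mono fun ω hω => by simp only [Pi.mul_apply, hω])

lemma condExp_mul_eq_cov_add_mul {G : Matrix ι ι ℝ} (hm : m ≤ m₀) [SigmaFinite (P.trim hm)]
    (hv : ∀ i, StronglyMeasurable[m] fun ω => v ω i) (hg : ∀ i, Integrable (fun ω => g ω i) P)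
    (hgg : ∀ i j, Integrable (fun ω => g ω i * g ω j) P)
    (hvg : ∀ i j, Integrable (fun ω => v ω i * g ω j) P)
    (hvv : ∀ i j, Integrable (fun ω => v ω i * v ω j) P)
    (hmean : ∀ i, P[fun ω => g ω i|m] =ᵐ[P] fun ω => v ω i)
    (hcov : ∀ i j, P[fun ω => (g ω i - v ω i) * (g ω j - v ω j)|m] =ᵐ[P] fun _ => G i j)
    (i j : ι) :
    P[fun ω => g ω i * g ω j|m] =ᵐ[P] fun ω => G i j + v ω i * v ω j := by
  set R : Ω → ℝ := fun ω => v ω i * g ω j + (v ω j * g ω i - v ω i * v ω j)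
  have hR : Integrable R P := (hvg i j).add ((hvg j i).sub (hvv i j))
  have hcondR : P[R|m] =ᵐ[P] fun ω => v ω i * v ω j + (v ω j * v ω i - v ω i * v ω j) :=
    (condExp_add (hvg i j) ((hvg j i).sub (hvv i j)) m).trans
      ((condExp_mul_eq_of_condExp_eq hv hg hvg hmean i j).add
        ((condExp_sub (hvg j i) (hvv i j) m).trans
          ((condExp_mul_eq_of_condExp_eq hv hg hvg hmean j i).sub (.of_eq
            (condExp_of_stronglyMeasurable hm ((hv i).mul (hv j)) (hvv i j))))))
  have hcov' : P[(fun ω => g ω i * g ω j) - R|m] =ᵐ[P] fun _ => G i j := by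
    convert hcov i j using 2
    funext ω
    simp only [Pi.sub_apply, R]
    ring
  filter_upwards [hcov', condExp_sub (hgg i j) hR m, hcondR] with ω h₁ h₂ h₃
  simp only [Pi.sub_apply] at h₂
  linarith

variable [Fintype ι]

lemma condExp_dotProduct_eq_of_condExp_eq (hv : ∀ i, StronglyMeasurable[m] fun ω => v ω i)
    (hg : ∀ i, Integrable (fun ω => g ω i) P) (hvg : ∀ i j, Integrable (fun ω => v ω i * g ω j) P)
    (hmean : ∀ i, P[fun ω => g ω i|m] =ᵐ[P] fun ω => v ω i) :
    P[fun ω => v ω ⬝ᵥ g ω|m] =ᵐ[P] fun ω => v ω ⬝ᵥ v ω :=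
  condExp_finsetSum_of_ae_eq (f := fun i ω => v ω i * g ω i) (fun i _ => hvg i i)
    fun i _ => condExp_mul_eq_of_condExp_eq hv hg hvg hmean i i

lemma condExp_dotProduct_mulVec_eq_trace_add {G : Matrix ι ι ℝ} (A : Matrix ι ι ℝ)
    (hm : m ≤ m₀) [SigmaFinite (P.trim hm)]
    (hv : ∀ i, StronglyMeasurable[m] fun ω => v ω i) (hg : ∀ i, Integrable (fun ω => g ω i) P)
    (hgg : ∀ i j, Integrable (fun ω => g ω i * g ω j) P)
    (hvg : ∀ i j, Integrable (fun ω => v ω i * g ω j) P)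
    (hvv : ∀ i j, Integrable (fun ω => v ω i * v ω j) P)
    (hmean : ∀ i, P[fun ω => g ω i|m] =ᵐ[P] fun ω => v ω i)
    (hcov : ∀ i j, P[fun ω => (g ω i - v ω i) * (g ω j - v ω j)|m] =ᵐ[P] fun _ => G i j) :
    P[fun ω => g ω ⬝ᵥ A *ᵥ g ω|m] =ᵐ[P] fun ω => (Aᵀ * G).trace + v ω ⬝ᵥ A *ᵥ v ω := by
  have hentry : ∀ i j, P[fun ω => A i j * (g ω i * g ω j)|m]
      =ᵐ[P] fun ω => A i j * (G i j + v ω i * v ω j) := fun i j =>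
    (condExp_smul (A i j) (fun ω => g ω i * g ω j) m).trans
      ((condExp_mul_eq_cov_add_mul hm hv hg hgg hvg hvv hmean hcov i j).mono
        fun ω hω => by simp only [Pi.smul_apply, smul_eq_mul, hω])
  have hrow : ∀ i, P[fun ω => ∑ j, A i j * (g ω i * g ω j)|m]
      =ᵐ[P] fun ω => ∑ j, A i j * (G i j + v ω i * v ω j) := fun i =>
    condExp_finsetSum_of_ae_eq (fun j _ => (hgg i j).const_mul _) fun j _ => hentry i j
  have hsum := condExp_finsetSum_of_ae_eq (s := Finset.univ)
    (fun i _ => integrable_finsetSum _ fun j _ => (hgg i j).const_mul _) fun i _ => hrow i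
  have hquad : ∀ x y : ι → ℝ, x ⬝ᵥ A *ᵥ y = ∑ i, ∑ j, A i j * (x i * y j) := fun x y => by
    rw [dotProduct_mulVec_eq_sum]
    exact Finset.sum_congr rfl fun i _ => Finset.sum_congr rfl fun j _ => by ring
  simp only [hquad]
  refine hsum.trans (.of_eq (funext fun ω => ?_))
  simp only [mul_add, Finset.sum_add_distrib, trace, diag, mul_apply, transpose_apply]
  rw [Finset.sum_comm]

lemma IsCenteredQuadratic.condExp_apply_sub_smul {J : (ι → ℝ) → ℝ} {A G : Matrix ι ι ℝ}
    {wstar : ι → ℝ} (hJ : IsCenteredQuadratic J A wstar) (hA : A.PosSemidef)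
    (hm : m ≤ m₀) [IsFiniteMeasure P] {w : Ω → ι → ℝ} (hw : Measurable[m] w)
    (hg : ∀ i, Integrable (fun ω => g ω i) P) (hgg : ∀ i j, Integrable (fun ω => g ω i * g ω j) P)
    (hwg : ∀ i j, Integrable (fun ω => w ω i * g ω j) P) (hJw : Integrable (fun ω => J (w ω)) P)
    (hmean : ∀ i, P[fun ω => g ω i|m] =ᵐ[P] fun ω => (A *ᵥ (w ω - wstar)) i)
    (hcov : ∀ i j, P[fun ω => (g ω i - (A *ᵥ (w ω - wstar)) i) *
      (g ω j - (A *ᵥ (w ω - wstar)) j)|m] =ᵐ[P] fun _ => G i j) (t : ℝ) :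
    P[fun ω => J (w ω - t • g ω)|m]
      =ᵐ[P] fun ω => J (w ω - t • (A *ᵥ (w ω - wstar))) + t ^ 2 / 2 * (Aᵀ * G).trace := by
  have hAs := isHermitian_iff_isSymm.1 hA.isHermitian
  set grad : Ω → ι → ℝ := fun ω => A *ᵥ (w ω - wstar)
  have hgrad_meas : Measurable[m] grad :=
    (show Continuous fun x : ι → ℝ => A *ᵥ (x - wstar) by fun_prop).measurable.comp hw
  have hgrad : ∀ i, StronglyMeasurable[m] fun ω => grad ω i := fun i =>
    ((measurable_pi_apply i).comp hgrad_meas).stronglyMeasurable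
  have hgrad_g := integrable_mulVec_sub_apply_mul A wstar hg hwg
  have hgrad_grad := hJ.integrable_mulVec_apply_mul hA (hw.mono hm le_rfl).aestronglyMeasurable hJw
  have hJw_meas : StronglyMeasurable[m] fun ω => J (w ω) :=
    (hJ.continuous.measurable.comp hw).stronglyMeasurable
  have hlin : Integrable (fun ω => grad ω ⬝ᵥ g ω) P :=
    integrable_finsetSum _ fun i _ => hgrad_g i i
  have hquad := integrable_dotProduct_mulVec A hgg
  have hexpand : (fun ω => J (w ω - t • g ω)) = (fun ω => J (w ω))
      + ((-t) • (fun ω => grad ω ⬝ᵥ g ω) + (t ^ 2 / 2) • fun ω => g ω ⬝ᵥ A *ᵥ g ω) := by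
    funext ω
    simp only [Pi.add_apply, Pi.smul_apply, smul_eq_mul, hJ.apply_sub_smul hAs, grad]
    ring
  rw [hexpand]
  have hlin' := hlin.smul (-t)
  have hquad' := hquad.smul (t ^ 2 / 2)
  filter_upwards [condExp_add hJw (hlin'.add hquad') m, condExp_add hlin' hquad' m,
    condExp_smul (-t) (fun ω => grad ω ⬝ᵥ g ω) m,
    condExp_smul (t ^ 2 / 2) (fun ω => g ω ⬝ᵥ A *ᵥ g ω) m,
    condExp_dotProduct_eq_of_condExp_eq hgrad hg hgrad_g hmean,
    condExp_dotProduct_mulVec_eq_trace_add A hm hgrad hg hgg hgrad_g hgrad_grad hmean hcov]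
    with ω h₁ h₂ h₃ h₄ h₅ h₆
  simp only [Pi.add_apply, Pi.smul_apply, smul_eq_mul] at h₁ h₂ h₃ h₄ ⊢
  rw [h₁, h₂, h₃, h₄, h₅, h₆, condExp_of_stronglyMeasurable hm hJw_meas hJw,
    hJ.apply_sub_smul hAs]
  ring

end CondExp

theorem stmt8_general {n : ℕ} [NeZero n] (μ : Measure ((Fin n → ℝ) × ℝ))
    (hxx : ∀ i j : Fin n, Integrable (fun p => p.1 i * p.1 j) μ)
    (hxy : ∀ i : Fin n, Integrable (fun p => p.1 i * p.2) μ)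
    (hyy : Integrable (fun p => p.2 ^ 2) μ)
    (J : (Fin n → ℝ) → ℝ)
    (hJ : ∀ w : Fin n → ℝ, J w = (1 / 2) * ∫ p, (p.2 - p.1 ⬝ᵥ w) ^ 2 ∂μ)
    (Exx : Matrix (Fin n) (Fin n) ℝ)
    (hExx : ∀ i j, Exx i j = ∫ p, p.1 i * p.1 j ∂μ)
    (Exy : Fin n → ℝ)
    (hExy : ∀ i, Exy i = ∫ p, p.1 i * p.2 ∂μ)
    (Sx : Matrix (Fin n) (Fin n) ℝ) (hSx : Sx = (1 / 2 : ℝ) • Exx)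
    (wstar : Fin n → ℝ) (hws : Exx *ᵥ wstar = Exy)
    {Ω : Type*} [MeasurableSpace Ω] (P : Measure Ω) [IsProbabilityMeasure P]
    (lam ε : ℝ) (hlam : 0 < lam)
    (wk gk : Ω → Fin n → ℝ) (hwmeas : Measurable wk)
    (G : Matrix (Fin n) (Fin n) ℝ)
    (hgi : ∀ i, Integrable (fun ω => gk ω i) P)
    (hgij : ∀ i j, Integrable (fun ω => gk ω i * gk ω j) P)
    (hwgi : ∀ i j, Integrable (fun ω => wk ω i * gk ω j) P)
    (hJw : Integrable (fun ω => J (wk ω)) P)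
    (hJwg : Integrable (fun ω => J (wk ω - ε • gk ω)) P)
    (hmean : ∀ i, P[(fun ω => gk ω i) | MeasurableSpace.comap wk inferInstance]
      =ᵐ[P] fun ω => (Exx *ᵥ wk ω - Exy) i)
    (hcov : ∀ i j,
      P[(fun ω => (gk ω i - (Exx *ᵥ wk ω - Exy) i) * (gk ω j - (Exx *ᵥ wk ω - Exy) j)) |
          MeasurableSpace.comap wk inferInstance]
        =ᵐ[P] fun _ => G i j)
    (wnext : Ω → Fin n → ℝ)
    (hnext : ∀ ω, wnext ω =
      if J (wk ω - ε • gk ω) - J (wk ω) ≤ -lam then wk ω - ε • gk ω else wk ω)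
    (hJnext : Integrable (fun ω => J (wnext ω)) P)
    (hherm : Exx.IsHermitian)
    (ρ : ℝ)
    (hρ : ρ = Finset.univ.sup' Finset.univ_nonempty
      fun i => (1 - ε * hherm.eigenvalues i) ^ 2) :
    ∀ᵐ ω ∂P,
      (P[(fun ω' => J (wnext ω')) | MeasurableSpace.comap wk inferInstance]) ω
        ≤ lam + ρ * J (wk ω) + ε ^ 2 * (Sx * G).trace + (1 - ρ) * J wstar := by
  obtain rfl : Exx = secondMoment μ := Matrix.ext hExx
  obtain rfl : Exy = crossMoment μ := funext hExy
  obtain rfl : J = leastSquaresLoss μ := funext hJ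
  have hA := posSemidef_secondMoment hxx
  have hJq := isCenteredQuadratic_leastSquaresLoss hxx hxy hyy hws
  have hgrad : ∀ w, secondMoment μ *ᵥ w - crossMoment μ = secondMoment μ *ᵥ (w - wstar) :=
    fun w => by rw [mulVec_sub, hws]
  simp only [hgrad] at hmean hcov
  have hstep := hJq.condExp_apply_sub_smul hA hwmeas.comap_le (comap_measurable wk) hgi hgij
    hwgi hJw hmean hcov ε
  have hρ_ge : ∀ i, (1 - ε * hA.isHermitian.eigenvalues i) ^ 2 ≤ ρ := fun i =>
    hρ ▸ Finset.le_sup' (fun i => (1 - ε * hherm.eigenvalues i) ^ 2) (Finset.mem_univ i)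
  have hnext_le : ∀ ω, leastSquaresLoss μ (wnext ω)
      ≤ leastSquaresLoss μ (wk ω - ε • gk ω) + lam := fun ω => by
    rw [hnext ω]
    split_ifs <;> linarith
  have htrace : (secondMoment μ)ᵀ * G = (2 : ℝ) • (Sx * G) := by
    rw [(isHermitian_iff_isSymm.1 hA.isHermitian).eq, hSx, smul_mul, smul_smul]
    norm_num
  filter_upwards [condExp_mono hJnext (hJwg.add (integrable_const lam)) (ae_of_all _ hnext_le),
    condExp_add hJwg (integrable_const lam) _, hstep] with ω hmono hsplit hcond
  rw [condExp_const hwmeas.comap_le, Pi.add_apply, hcond, htrace, trace_smul] at hsplit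
  have hcontract := hJq.apply_sub_smul_mulVec_le hA hρ_ge (wk ω)
  simp only [smul_eq_mul] at hsplit
  linarith

theorem stmt8 {n : ℕ} [NeZero n] (μ : Measure ((Fin n → ℝ) × ℝ)) [IsProbabilityMeasure μ]
    (hxx : ∀ i j : Fin n, Integrable (fun p => p.1 i * p.1 j) μ)
    (hxy : ∀ i : Fin n, Integrable (fun p => p.1 i * p.2) μ)
    (hyy : Integrable (fun p => p.2 ^ 2) μ)
    (J : (Fin n → ℝ) → ℝ)
    (hJ : ∀ w : Fin n → ℝ, J w = (1 / 2) * ∫ p, (p.2 - p.1 ⬝ᵥ w) ^ 2 ∂μ)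
    (Exx : Matrix (Fin n) (Fin n) ℝ)
    (hExx : ∀ i j, Exx i j = ∫ p, p.1 i * p.1 j ∂μ)
    (Exy : Fin n → ℝ)
    (hExy : ∀ i, Exy i = ∫ p, p.1 i * p.2 ∂μ)
    (Sx : Matrix (Fin n) (Fin n) ℝ) (hSx : Sx = (1 / 2 : ℝ) • Exx)
    (wstar : Fin n → ℝ) (hws : Exx *ᵥ wstar = Exy)
    {Ω : Type*} [MeasurableSpace Ω] (P : Measure Ω) [IsProbabilityMeasure P]
    (lam ε : ℝ) (hlam : 0 < lam) (hε : 0 < ε)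
    (wk gk : Ω → Fin n → ℝ) (hwmeas : Measurable wk)
    (G : Matrix (Fin n) (Fin n) ℝ)
    (hgi : ∀ i, Integrable (fun ω => gk ω i) P)
    (hgij : ∀ i j, Integrable (fun ω => gk ω i * gk ω j) P)
    (hwgi : ∀ i j, Integrable (fun ω => wk ω i * gk ω j) P)
    (hJw : Integrable (fun ω => J (wk ω)) P)
    (hJwg : Integrable (fun ω => J (wk ω - ε • gk ω)) P)
    (hmean : ∀ i, P[(fun ω => gk ω i) | MeasurableSpace.comap wk inferInstance]
      =ᵐ[P] fun ω => (Exx *ᵥ wk ω - Exy) i)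
    (hcov : ∀ i j,
      P[(fun ω => (gk ω i - (Exx *ᵥ wk ω - Exy) i) * (gk ω j - (Exx *ᵥ wk ω - Exy) j)) |
          MeasurableSpace.comap wk inferInstance]
        =ᵐ[P] fun _ => G i j)
    (wnext : Ω → Fin n → ℝ)
    (hnext : ∀ ω, wnext ω =
      if J (wk ω - ε • gk ω) - J (wk ω) ≤ -lam then wk ω - ε • gk ω else wk ω)
    (hJnext : Integrable (fun ω => J (wnext ω)) P)
    (hherm : Exx.IsHermitian)
    (ρ : ℝ)
    (hρ : ρ = Finset.univ.sup' Finset.univ_nonempty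
      fun i => (1 - ε * hherm.eigenvalues i) ^ 2) :
    ∀ᵐ ω ∂P,
      (P[(fun ω' => J (wnext ω')) | MeasurableSpace.comap wk inferInstance]) ω
        ≤ lam + ρ * J (wk ω) + ε ^ 2 * (Sx * G).trace + (1 - ρ) * J wstar :=
  stmt8_general μ hxx hxy hyy J hJ Exx hExx Exy hExy Sx hSx wstar hws P lam ε hlam wk gk hwmeas G
    hgi hgij hwgi hJw hJwg hmean hcov wnext hnext hJnext hherm ρ hρ
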